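/- arXiv:2410.11318 — 7 statements merged into one kernel-verified Lean document; each statement's English description precedes it below -/
import Mathlib

section
/- Let n be a positive integer and write 3n+1 = 2^ℓ · m with m odd (and gcd(6,m)=1 since 3 ∤ 3n+1). Then the sign of ∑_{d | m} (3/d)·d equals (3/m) = (-1)^{(m-1)/2} · (m/3), where (3/d) denotes the Kronecker symbol. -/
/-!
The function `d ↦ (a/d)·d` is multiplicative, hence so is its divisor sum, so for `a` coprime
to `m` both sides of `sign (∑_{d ∣ m} (a/d)·d) = (a/m)` may be checked on prime powers `p^k`.
There the sum is the geometric sum `∑_{i ≤ k} x^i` with `x = (a/p)·p`, and since `|x| ≥ 2`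
its sign is that of its top term `x^k`, namely `(a/p)^k = (a/p^k)`.
-/

open Finset ArithmeticFunction
open scoped NumberTheorySymbols ArithmeticFunction.zeta

theorem Int.sign_geom_sum {x : ℤ} (hx₀ : x ≠ 0) (hx₁ : x ≠ -1) (k : ℕ) :
    (∑ i ∈ Finset.range (k + 1), x ^ i).sign = x.sign ^ k := by
  rcases hx₀.lt_or_gt with hneg | hpos
  · have hlt : x + 1 < 0 := by omega
    rw [Int.sign_eq_neg_one_of_neg hneg]
    rcases k.even_or_odd with hk | hk
    · rw [hk.neg_one_pow, Int.sign_eq_one_iff_pos, geom_sum_pos_iff k.succ_ne_zero]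
      exact Or.inl hk.add_one
    · rw [hk.neg_one_pow, Int.sign_eq_neg_one_iff_neg, geom_sum_neg_iff k.succ_ne_zero]
      exact ⟨hk.add_one, hlt⟩
  · rw [Int.sign_eq_one_of_pos hpos, one_pow, Int.sign_eq_one_iff_pos]
    exact geom_sum_pos hpos.le k.succ_ne_zero

namespace jacobiSym

def twistId (a : ℤ) : ArithmeticFunction ℤ :=
  ⟨fun d => J(a | d) * d, by simp⟩

theorem twistId_apply (a : ℤ) (d : ℕ) : twistId a d = J(a | d) * d := rfl

theorem isMultiplicative_twistId (a : ℤ) : (twistId a).IsMultiplicative := by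
  refine ⟨by simp [twistId_apply], fun {m n} _ => ?_⟩
  rcases eq_or_ne m 0 with rfl | hm
  · simp
  rcases eq_or_ne n 0 with rfl | hn
  · simp
  simp only [twistId_apply, Nat.cast_mul, mul_right' a hm hn]
  ring

theorem sum_divisors_twistId_eq (a : ℤ) (m : ℕ) :
    ∑ d ∈ m.divisors, J(a | d) * d = (twistId a * ζ) m := by
  rw [coe_mul_zeta_apply]
  rfl

theorem sign_sum_divisors_prime_pow {a : ℤ} {p : ℕ} (hp : p.Prime) (ha : a.gcd p = 1)
    (k : ℕ) :
    (∑ d ∈ (p ^ k).divisors, J(a | d) * d).sign = J(a | p ^ k) := by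
  have hJ := eq_one_or_neg_one ha
  have hp2 : (2 : ℤ) ≤ p := by exact_mod_cast hp.two_le
  have hsign : (J(a | p) * p).sign = J(a | p) := by
    rw [Int.sign_mul, Int.sign_natCast_of_ne_zero hp.ne_zero, mul_one]
    rcases hJ with h | h <;> rw [h] <;> rfl
  obtain ⟨hx₀, hx₁⟩ : J(a | p) * p ≠ 0 ∧ J(a | p) * p ≠ -1 := by
    rcases hJ with h | h <;> rw [h] <;> omega
  simp only [Nat.sum_divisors_prime_pow hp, Nat.cast_pow, pow_right, ← mul_pow]
  rw [Int.sign_geom_sum hx₀ hx₁, hsign]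

theorem sign_sum_divisors {a : ℤ} {m : ℕ} (hm : m ≠ 0) (ha : a.gcd m = 1) :
    (∑ d ∈ m.divisors, J(a | d) * d).sign = J(a | m) := by
  induction m using Nat.recOnPosPrimePosCoprime with
  | zero => exact absurd rfl hm
  | one => simp [one_right]
  | prime_pow p k hp hk =>
    have hcop : a.natAbs.Coprime (p ^ k) := ha
    exact sign_sum_divisors_prime_pow hp (hcop.coprime_dvd_right (dvd_pow_self p hk.ne')) k
  | coprime m n hm₁ hn₁ hmn ihm ihn =>
    have hcop : a.natAbs.Coprime (m * n) := ha
    have hmul :=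
      ((isMultiplicative_twistId a).mul isMultiplicative_zeta.natCast).map_mul_of_coprime hmn
    rw [sum_divisors_twistId_eq, hmul, ← sum_divisors_twistId_eq, ← sum_divisors_twistId_eq,
      Int.sign_mul, ihm (by omega) (Nat.Coprime.coprime_mul_right_right hcop),
      ihn (by omega) (Nat.Coprime.coprime_mul_left_right hcop), mul_right' a (by omega) (by omega)]

end jacobiSym

theorem stmt3_general (n ℓ m : ℕ) (hm : Odd m) (h : 3 * n + 1 = 2 ^ ℓ * m) :
    Int.sign (∑ d ∈ m.divisors, jacobiSym 3 d * (d : ℤ)) = jacobiSym 3 m ∧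
      jacobiSym 3 m = (-1) ^ ((m - 1) / 2) * jacobiSym (m : ℤ) 3 := by
  have h3m : ¬ 3 ∣ m := fun hd => by
    have : 3 ∣ 3 * n + 1 := h ▸ hd.mul_left (2 ^ ℓ)
    omega
  have hgcd : Int.gcd 3 m = 1 := (Nat.Prime.coprime_iff_not_dvd Nat.prime_three).mpr h3m
  refine ⟨jacobiSym.sign_sum_divisors hm.pos.ne' hgcd, ?_⟩
  have hqr := jacobiSym.quadratic_reciprocity (by decide : Odd 3) hm
  have hexp : 3 / 2 * (m / 2) = (m - 1) / 2 := by
    obtain ⟨j, rfl⟩ := hm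
    omega
  simpa [hexp] using hqr

/-- Writing `3n+1 = 2^ℓ m` with `m` odd, the sign of `∑_{d ∣ m} (3/d) d` equals
`(3/m) = (-1)^((m-1)/2) (m/3)`, where `(3/d)` is the Kronecker (Jacobi) symbol. -/
theorem stmt3 (n ℓ m : ℕ) (hn : 0 < n) (hm : Odd m) (h : 3 * n + 1 = 2 ^ ℓ * m) :
    Int.sign (∑ d ∈ m.divisors, jacobiSym 3 d * (d : ℤ)) = jacobiSym 3 m ∧
      jacobiSym 3 m = (-1) ^ ((m - 1) / 2) * jacobiSym (m : ℤ) 3 :=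
  stmt3_general n ℓ m hm h
end

section
/- Let n be a positive integer with n ≡ 1 (mod 4) and 3 | n. Write n = 3^ℓ m with 3 ∤ m and ℓ ≥ 1. Then ∑_{d|n} (-1/d) d^2 + 6 ∑_{d | (n/3)} (-1/d) d^2 = (∑_{d|m} (-1/d) d^2) · (7 + (-1)^ℓ 3^{2ℓ+1})/10, and this quantity is strictly positive. -/
/-!
Let `G n = ∑_{d ∣ n} (-1/d) d²`. It is multiplicative, and `10 G(3^k) = 1 - (-9)^(k+1)` by the
geometric series, so both sides of the identity are `G m` times a constant depending on `ℓ` only.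
For positivity, `(-1/m) G m > 0` for every `m > 0`: on a prime power `p^k` with `(-1/p) = -1` this is
an alternating geometric sum in `p² > 1` whose last term dominates. Since `n ≡ 1 (mod 4)` forces
`(-1/m) = (-1)^ℓ`, the sign of `G m` matches the sign of `7 + (-1)^ℓ 3^(2ℓ+1)`.
-/

open Finset ArithmeticFunction

lemma neg_one_pow_mul_geom_sum_pos {R : Type*} [Ring R] [LinearOrder R] [IsStrictOrderedRing R]
    {x : R} (hx : x + 1 < 0) (k : ℕ) : 0 < (-1) ^ k * ∑ i ∈ range (k + 1), x ^ i := by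
  rcases Nat.even_or_odd k with hk | hk
  · rw [hk.neg_one_pow, one_mul, geom_sum_pos_iff k.succ_ne_zero]
    exact Or.inl hk.add_one
  · rw [hk.neg_one_pow, neg_one_mul, neg_pos, geom_sum_neg_iff k.succ_ne_zero]
    exact ⟨hk.add_one, hx⟩

lemma jacobiSym_neg_one_three : jacobiSym (-1) 3 = -1 := by
  rw [jacobiSym.at_neg_one (by decide)]
  decide

namespace ArithmeticFunction

def jacobiSq : ArithmeticFunction ℤ :=
  ⟨fun d => jacobiSym (-1) d * (d : ℤ) ^ 2, by simp⟩

lemma jacobiSq_apply (d : ℕ) : jacobiSq d = jacobiSym (-1) d * (d : ℤ) ^ 2 := rfl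

lemma isMultiplicative_jacobiSq : jacobiSq.IsMultiplicative := by
  refine IsMultiplicative.iff_ne_zero.2 ⟨by simp [jacobiSq_apply], fun {a b} ha hb _ => ?_⟩
  simp only [jacobiSq_apply, Nat.cast_mul, jacobiSym.mul_right' _ ha hb]
  ring

def sigmaJacobiSq : ArithmeticFunction ℤ := ↑zeta * jacobiSq

lemma sigmaJacobiSq_apply (n : ℕ) :
    sigmaJacobiSq n = ∑ d ∈ n.divisors, jacobiSym (-1) d * (d : ℤ) ^ 2 :=
  coe_zeta_mul_apply (f := jacobiSq)

lemma isMultiplicative_sigmaJacobiSq : sigmaJacobiSq.IsMultiplicative :=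
  isMultiplicative_zeta.natCast.mul isMultiplicative_jacobiSq

lemma sigmaJacobiSq_prime_pow {p : ℕ} (hp : p.Prime) (k : ℕ) :
    sigmaJacobiSq (p ^ k) = ∑ i ∈ range (k + 1), (jacobiSym (-1) p * (p : ℤ) ^ 2) ^ i := by
  rw [sigmaJacobiSq_apply, Nat.sum_divisors_prime_pow hp]
  refine sum_congr rfl fun i _ => ?_
  rw [jacobiSym.pow_right, Nat.cast_pow, ← pow_mul, pow_mul', mul_pow]

lemma ten_mul_sigmaJacobiSq_three_pow (k : ℕ) :
    10 * sigmaJacobiSq (3 ^ k) = 1 - (-9 : ℤ) ^ (k + 1) := by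
  rw [sigmaJacobiSq_prime_pow Nat.prime_three, jacobiSym_neg_one_three, ← geom_sum_mul_neg]
  norm_num [mul_comm]

lemma jacobiSym_mul_sigmaJacobiSq_prime_pow_pos {p : ℕ} (hp : p.Prime) (k : ℕ) :
    0 < jacobiSym (-1) (p ^ k) * sigmaJacobiSq (p ^ k) := by
  have hp1 : (1 : ℤ) < (p : ℤ) ^ 2 := one_lt_pow₀ (by exact_mod_cast hp.one_lt) two_ne_zero
  rw [jacobiSym.pow_right, sigmaJacobiSq_prime_pow hp]
  rcases jacobiSym.eq_one_or_neg_one (a := -1) (b := p) (by simp) with h | h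
  · rw [h, one_pow, one_mul]
    exact geom_sum_pos (by positivity) k.succ_ne_zero
  · rw [h, neg_one_mul]
    exact neg_one_pow_mul_geom_sum_pos (by linarith) k

lemma jacobiSym_mul_sigmaJacobiSq_pos {m : ℕ} (hm : 0 < m) :
    0 < jacobiSym (-1) m * sigmaJacobiSq m := by
  induction m using Nat.recOnPosPrimePosCoprime with
  | zero => exact absurd hm (lt_irrefl 0)
  | one => simp [isMultiplicative_sigmaJacobiSq.map_one]
  | prime_pow p k hp _ => exact jacobiSym_mul_sigmaJacobiSq_prime_pow_pos hp k
  | coprime a b ha hb hab iha ihb =>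
    rw [jacobiSym.mul_right' _ (by omega) (by omega),
      isMultiplicative_sigmaJacobiSq.map_mul_of_coprime hab, mul_mul_mul_comm]
    exact mul_pos (iha (by omega)) (ihb (by omega))

lemma ten_mul_sigmaJacobiSq_three_pow_succ_add (k : ℕ) :
    10 * (sigmaJacobiSq (3 ^ (k + 1)) + 6 * sigmaJacobiSq (3 ^ k))
      = 7 + (-1) ^ (k + 1) * 3 ^ (2 * (k + 1) + 1) := by
  have h9 : (-9 : ℤ) ^ k = (-1) ^ k * 3 ^ (2 * k) := by rw [pow_mul, ← mul_pow]; norm_num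
  linear_combination ten_mul_sigmaJacobiSq_three_pow (k + 1)
    + 6 * ten_mul_sigmaJacobiSq_three_pow k - 27 * h9

end ArithmeticFunction

lemma jacobiSym_neg_one_eq_of_three_pow_mul {ℓ m : ℕ} (hm : m ≠ 0) (h4 : 3 ^ ℓ * m % 4 = 1) :
    jacobiSym (-1) m = (-1) ^ ℓ := by
  have hjn : jacobiSym (-1) (3 ^ ℓ * m) = 1 := by
    rw [jacobiSym.at_neg_one (Nat.odd_iff.2 (by omega))]
    exact_mod_cast ZMod.χ₄_nat_one_mod_four h4
  rw [jacobiSym.mul_right' _ (by positivity) hm, jacobiSym.pow_right,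
    jacobiSym_neg_one_three] at hjn
  have hsq : ((-1 : ℤ) ^ ℓ) ^ 2 = 1 := by rw [← pow_mul, pow_mul']; norm_num
  linear_combination (-1 : ℤ) ^ ℓ * hjn - jacobiSym (-1) m * hsq

lemma neg_one_pow_mul_seven_add_pos {ℓ : ℕ} (hl : 1 ≤ ℓ) :
    0 < (-1 : ℤ) ^ ℓ * (7 + (-1) ^ ℓ * 3 ^ (2 * ℓ + 1)) := by
  have h27 : (27 : ℤ) ≤ 3 ^ (2 * ℓ + 1) :=
    (pow_le_pow_right₀ (by norm_num) (by omega : 3 ≤ 2 * ℓ + 1)).trans_eq' (by norm_num)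
  rcases neg_one_pow_eq_or ℤ ℓ with h | h <;> rw [h] <;> linarith

theorem stmt5_general (n ℓ m : ℕ) (h4 : n % 4 = 1) (hl : 1 ≤ ℓ)
    (h3m : ¬ 3 ∣ m) (hnm : n = 3 ^ ℓ * m) :
    10 * ((∑ d ∈ n.divisors, jacobiSym (-1) d * (d : ℤ) ^ 2)
          + 6 * ∑ d ∈ (n / 3).divisors, jacobiSym (-1) d * (d : ℤ) ^ 2)
        = (∑ d ∈ m.divisors, jacobiSym (-1) d * (d : ℤ) ^ 2)
            * (7 + (-1) ^ ℓ * 3 ^ (2 * ℓ + 1)) ∧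
      0 < (∑ d ∈ n.divisors, jacobiSym (-1) d * (d : ℤ) ^ 2)
          + 6 * ∑ d ∈ (n / 3).divisors, jacobiSym (-1) d * (d : ℤ) ^ 2 := by
  simp only [← sigmaJacobiSq_apply]
  have hm : m ≠ 0 := by rintro rfl; simp at hnm; omega
  have hpos : 0 < sigmaJacobiSq m * (7 + (-1) ^ ℓ * 3 ^ (2 * ℓ + 1)) := by
    have := mul_pos (jacobiSym_mul_sigmaJacobiSq_pos (Nat.pos_of_ne_zero hm))
      (neg_one_pow_mul_seven_add_pos hl)
    rwa [jacobiSym_neg_one_eq_of_three_pow_mul hm (hnm ▸ h4), mul_mul_mul_comm, ← mul_pow,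
      neg_one_mul, neg_neg, one_pow, one_mul] at this
  obtain ⟨k, rfl⟩ : ∃ k, ℓ = k + 1 := ⟨ℓ - 1, by omega⟩
  have hcop (j : ℕ) : Nat.Coprime (3 ^ j) m :=
    ((Nat.Prime.coprime_iff_not_dvd Nat.prime_three).2 h3m).pow_left j
  have hdiv : n / 3 = 3 ^ k * m := by
    rw [hnm, pow_succ, mul_right_comm, Nat.mul_div_cancel _ three_pos]
  have hformula : 10 * (sigmaJacobiSq n + 6 * sigmaJacobiSq (n / 3))
      = sigmaJacobiSq m * (7 + (-1) ^ (k + 1) * 3 ^ (2 * (k + 1) + 1)) := by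
    rw [hdiv, hnm, isMultiplicative_sigmaJacobiSq.map_mul_of_coprime (hcop _),
      isMultiplicative_sigmaJacobiSq.map_mul_of_coprime (hcop _),
      ← ten_mul_sigmaJacobiSq_three_pow_succ_add]
    ring
  exact ⟨hformula, pos_of_mul_pos_right (hformula ▸ hpos) (by norm_num)⟩

/-- For `n ≡ 1 (mod 4)` with `n = 3^ℓ m`, `ℓ ≥ 1`, `3 ∤ m`:
`∑_{d∣n} (-1/d) d² + 6∑_{d∣(n/3)} (-1/d) d²
  = (∑_{d∣m} (-1/d) d²) (7 + (-1)^ℓ 3^{2ℓ+1})/10 > 0`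
(stated with the factor `10` multiplied out). -/
theorem stmt5 (n ℓ m : ℕ) (hn : 0 < n) (h4 : n % 4 = 1) (hl : 1 ≤ ℓ)
    (h3m : ¬ 3 ∣ m) (hnm : n = 3 ^ ℓ * m) :
    10 * ((∑ d ∈ n.divisors, jacobiSym (-1) d * (d : ℤ) ^ 2)
          + 6 * ∑ d ∈ (n / 3).divisors, jacobiSym (-1) d * (d : ℤ) ^ 2)
        = (∑ d ∈ m.divisors, jacobiSym (-1) d * (d : ℤ) ^ 2)
            * (7 + (-1) ^ ℓ * 3 ^ (2 * ℓ + 1)) ∧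
      0 < (∑ d ∈ n.divisors, jacobiSym (-1) d * (d : ℤ) ^ 2)
          + 6 * ∑ d ∈ (n / 3).divisors, jacobiSym (-1) d * (d : ℤ) ^ 2 :=
  stmt5_general n ℓ m h4 hl h3m hnm
end

section
/- For every positive integer n ≡ 2 (mod 4), the coefficient of q^n in ∏_{j≥1} (1-q^j)^4 (1-q^{2j})^2 / (1-q^{4j})^2 is zero. -/
/-!
Gauss's identity `θ(q) := ∑_{j ∈ ℤ} (-1)^j q^{j²} = ∏_{t ≥ 0} (1 - q^{2t+1})² (1 - q^{2t+2})`,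
together with `∏ (1 - q^j) = ∏ (1 - q^{2t+1}) ∏ (1 - q^{2j})`, turns the product into
`θ(q)² θ(q²)²`. Its coefficient of `q^n` is `∑ (-1)^{x+y+z+w}` over the solutions of
`x² + y² + 2z² + 2w² = n`. When `n ≡ 2 (mod 4)` every solution has `x + y` even and
`y + z + w` odd, so `(x, y, z, w) ↦ (z + w, z - w, (x + y)/2, (x - y)/2)` is a sign-reversing
involution of the solutions and the coefficient vanishes.

Gauss's identity is used in its finite form
`∏_{t<g} (1 - q^{2t+1})² = ∑_{|j| ≤ g} (-1)^j q^{j²} [2g, g+j]_{q²}`,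
whose two sides satisfy the same recursion in `g`. Multiplying by `(q²; q²)_g` makes each
Gaussian binomial `≡ 1` to high order, so everything is compared modulo `X^(N+1)`, where the
truncated products are units.
-/

open Finset PowerSeries

namespace ThetaProduct

section GaussBinom

variable {R : Type*} [CommRing R] (p : R)

/-- The Gaussian binomial coefficient `[K, k]_p`, extended by zero to all `k : ℤ`. -/
def gaussBinom : ℕ → ℤ → R
  | 0, k => if k = 0 then 1 else 0
  | K + 1, k => gaussBinom K k + p ^ ((K : ℤ) + 1 - k).toNat * gaussBinom K (k - 1)

theorem gaussBinom_succ (K : ℕ) (k : ℤ) :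
    gaussBinom p (K + 1) k
      = gaussBinom p K k + p ^ ((K : ℤ) + 1 - k).toNat * gaussBinom p K (k - 1) :=
  rfl

theorem gaussBinom_of_neg : ∀ (K : ℕ) {k : ℤ}, k < 0 → gaussBinom p K k = 0
  | 0, k, hk => if_neg hk.ne
  | K + 1, k, hk => by
    rw [gaussBinom_succ, gaussBinom_of_neg K hk, gaussBinom_of_neg K (by omega), mul_zero,
      add_zero]

theorem gaussBinom_of_lt : ∀ (K : ℕ) {k : ℤ}, (K : ℤ) < k → gaussBinom p K k = 0
  | 0, k, hk => if_neg (by omega)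
  | K + 1, k, hk => by
    rw [gaussBinom_succ, gaussBinom_of_lt K (by omega), gaussBinom_of_lt K (by omega), mul_zero,
      add_zero]

theorem gaussBinom_zero_right : ∀ K : ℕ, gaussBinom p K 0 = 1
  | 0 => if_pos rfl
  | K + 1 => by
    rw [gaussBinom_succ, gaussBinom_zero_right K, gaussBinom_of_neg p K (by omega), mul_zero,
      add_zero]

theorem mul_gaussBinom_congr {a b : R} {K : ℕ} {k : ℤ} (h : 0 ≤ k → k ≤ K → a = b) :
    a * gaussBinom p K k = b * gaussBinom p K k := by
  by_cases hk : 0 ≤ k ∧ k ≤ K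
  · rw [h hk.1 hk.2]
  · rcases not_and_or.mp hk with hk | hk
    · rw [gaussBinom_of_neg p K (by omega), mul_zero, mul_zero]
    · rw [gaussBinom_of_lt p K (by omega), mul_zero, mul_zero]

theorem gaussBinom_succ' : ∀ (K : ℕ) (k : ℤ),
    gaussBinom p (K + 1) k = p ^ k.toNat * gaussBinom p K k + gaussBinom p K (k - 1)
  | 0, k => by
    rcases eq_or_ne k 0 with rfl | h0
    · simp [gaussBinom]
    rcases eq_or_ne k 1 with rfl | h1
    · simp [gaussBinom]
    · simp [gaussBinom, h0, sub_eq_zero, h1]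
  | K + 1, k => by
    have key : p ^ ((K : ℤ) + 1 + 1 - k).toNat * (p ^ (k - 1).toNat * gaussBinom p K (k - 1))
        = p ^ k.toNat * (p ^ ((K : ℤ) + 1 - k).toNat * gaussBinom p K (k - 1)) := by
      simp only [← mul_assoc]
      refine mul_gaussBinom_congr p fun h0 h1 => ?_
      rw [← pow_add, ← pow_add]
      congr 1
      omega
    conv_rhs => rw [gaussBinom_succ p K, gaussBinom_succ p K (k - 1)]
    rw [gaussBinom_succ p (K + 1), gaussBinom_succ' K, gaussBinom_succ' K, Nat.cast_succ,
      show (K : ℤ) + 1 - (k - 1) = K + 1 + 1 - k by ring]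
    linear_combination key

theorem gaussBinom_add_two (K : ℕ) (k : ℤ) :
    gaussBinom p (K + 2) k = p ^ k.toNat * gaussBinom p K k
      + (1 + p ^ (K + 1)) * gaussBinom p K (k - 1)
      + p ^ ((K : ℤ) + 2 - k).toNat * gaussBinom p K (k - 2) := by
  have key : p ^ ((K : ℤ) + 2 - k).toNat * (p ^ (k - 1).toNat * gaussBinom p K (k - 1))
      = p ^ (K + 1) * gaussBinom p K (k - 1) := by
    rw [← mul_assoc]
    refine mul_gaussBinom_congr p fun h0 h1 => ?_
    rw [← pow_add]
    congr 1
    omega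
  rw [gaussBinom_succ p (K + 1), gaussBinom_succ', gaussBinom_succ', Nat.cast_succ,
    show k - 1 - 1 = k - 2 by ring, show (K : ℤ) + 1 + 1 - k = K + 2 - k by ring]
  linear_combination key

/-- The `q`-Pochhammer symbol `(p; p)_m`. -/
def qPochhammer (m : ℕ) : R := ∏ i ∈ Icc 1 m, (1 - p ^ i)

theorem qPochhammer_zero : qPochhammer p 0 = 1 := by simp [qPochhammer]

theorem qPochhammer_succ (m : ℕ) : qPochhammer p (m + 1) = qPochhammer p m * (1 - p ^ (m + 1)) :=
  prod_Icc_succ_top (by omega) _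

theorem gaussBinom_mul_qPochhammer (K : ℕ) : ∀ a b : ℕ, a + b = K →
    gaussBinom p K a * qPochhammer p a * qPochhammer p b = qPochhammer p K := by
  induction K with
  | zero =>
    intro a b hab
    obtain ⟨rfl, rfl⟩ : a = 0 ∧ b = 0 := by omega
    simp [gaussBinom_zero_right, qPochhammer_zero]
  | succ K ih =>
    rintro (_ | a) b hab
    · simp [gaussBinom_zero_right, qPochhammer_zero, ← hab]
    rw [gaussBinom_succ, Nat.cast_succ, add_sub_cancel_right,
      show (K : ℤ) + 1 - (a + 1) = b by omega, Int.toNat_natCast]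
    rcases b with _ | b
    · obtain rfl : K = a := by omega
      have hK := ih K 0 rfl
      rw [qPochhammer_zero, mul_one] at hK
      rw [gaussBinom_of_lt p K (k := K + 1) (by omega), qPochhammer_succ, qPochhammer_zero]
      linear_combination (1 - p ^ (K + 1)) * hK
    · obtain rfl : K = a + b + 1 := by omega
      have h1 := ih (a + 1) b (by omega)
      have h2 := ih a (b + 1) (by omega)
      rw [Nat.cast_succ] at h1
      rw [qPochhammer_succ p a] at h1 ⊢
      rw [qPochhammer_succ p b] at h2 ⊢
      rw [qPochhammer_succ p (a + b + 1)]
      linear_combination (1 - p ^ (b + 1)) * h1 + p ^ (b + 1) * (1 - p ^ (a + 1)) * h2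

end GaussBinom

section Theta

variable {R : Type*} [CommRing R] (q : R)

def oddProd (g : ℕ) : R := ∏ t ∈ range g, (1 - q ^ (2 * t + 1))

theorem oddProd_succ (g : ℕ) : oddProd q (g + 1) = oddProd q g * (1 - q ^ (2 * g + 1)) :=
  prod_range_succ _ _

noncomputable def theta (N : ℕ) : R :=
  ∑ j ∈ Icc (-N : ℤ) N, (j.negOnePow : R) * q ^ (j.natAbs ^ 2)

def thetaTerm (g : ℕ) (j : ℤ) : R :=
  (j.negOnePow : R) * q ^ (j.natAbs ^ 2) * gaussBinom (q ^ 2) (2 * g) (g + j)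

theorem thetaTerm_succ (g : ℕ) (j : ℤ) :
    thetaTerm q (g + 1) j = (1 + q ^ (2 * (2 * g + 1))) * thetaTerm q g j
      - q ^ (2 * g + 1) * (thetaTerm q g (j + 1) + thetaTerm q g (j - 1)) := by
  have up := mul_gaussBinom_congr (q ^ 2) (K := 2 * g) (k := g + 1 + j)
    (a := q ^ (j.natAbs ^ 2) * (q ^ 2) ^ ((g : ℤ) + 1 + j).toNat)
    (b := q ^ (2 * g + 1) * q ^ ((j + 1).natAbs ^ 2)) fun h0 _ => by
      rw [← pow_mul, ← pow_add, ← pow_add]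
      congr 1
      zify
      push_cast [Int.toNat_of_nonneg h0, sq_abs]
      ring
  have down := mul_gaussBinom_congr (q ^ 2) (K := 2 * g) (k := g + j - 1)
    (a := q ^ (j.natAbs ^ 2) * (q ^ 2) ^ (2 * (g : ℤ) + 2 - (g + 1 + j)).toNat)
    (b := q ^ (2 * g + 1) * q ^ ((j - 1).natAbs ^ 2)) fun _ h1 => by
      rw [← pow_mul, ← pow_add, ← pow_add]
      congr 1
      zify
      push_cast at h1 ⊢
      push_cast [Int.toNat_of_nonneg (show 0 ≤ 2 * (g : ℤ) + 2 - (g + 1 + j) by omega), sq_abs]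
      ring
  rw [thetaTerm, show 2 * (g + 1) = 2 * g + 2 by ring, Nat.cast_succ, gaussBinom_add_two,
    show (g : ℤ) + 1 + j - 1 = g + j by ring, show (g : ℤ) + 1 + j - 2 = g + j - 1 by ring]
  simp only [thetaTerm, Int.negOnePow_succ, Int.negOnePow_sub, Int.negOnePow_one,
    show (g : ℤ) + (j + 1) = g + 1 + j by ring, show (g : ℤ) + (j - 1) = g + j - 1 by ring]
  push_cast
  linear_combination (j.negOnePow : R) * (up + down)

theorem sum_thetaTerm_of_le {g : ℕ} {a b : ℤ} (ha : a ≤ -g) (hb : g ≤ b) :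
    ∑ j ∈ Icc a b, thetaTerm q g j = ∑ j ∈ Icc (-g : ℤ) g, thetaTerm q g j := by
  refine (sum_subset (Icc_subset_Icc ha hb) fun j _ hj => ?_).symm
  rw [mem_Icc, not_and_or] at hj
  rw [thetaTerm]
  rcases hj with hj | hj
  · rw [gaussBinom_of_neg _ _ (by omega), mul_zero]
  · rw [gaussBinom_of_lt _ _ (by push_cast; omega), mul_zero]

theorem sum_Icc_add_right {M : Type*} [AddCommMonoid M] (f : ℤ → M) (a b d : ℤ) :
    ∑ j ∈ Icc a b, f (j + d) = ∑ j ∈ Icc (a + d) (b + d), f j := by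
  rw [← map_add_right_Icc, sum_map]
  rfl

theorem oddProd_sq (g : ℕ) : oddProd q g ^ 2 = ∑ j ∈ Icc (-g : ℤ) g, thetaTerm q g j := by
  induction g with
  | zero => simp [oddProd, thetaTerm, gaussBinom]
  | succ g ih =>
    have widen :
        ∑ j ∈ Icc (-(g + 1 : ℕ) : ℤ) (g + 1 : ℕ), thetaTerm q g j = oddProd q g ^ 2 := by
      rw [sum_thetaTerm_of_le q (by push_cast; omega) (by push_cast; omega), ih]
    have shift (d : ℤ) (h₁ : -1 ≤ d) (h₂ : d ≤ 1) :
        ∑ j ∈ Icc (-(g + 1 : ℕ) : ℤ) (g + 1 : ℕ), thetaTerm q g (j + d)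
          = oddProd q g ^ 2 := by
      rw [sum_Icc_add_right (thetaTerm q g), sum_thetaTerm_of_le q (by push_cast; omega)
        (by push_cast; omega), ih]
    simp only [sub_eq_add_neg _ (1 : ℤ), thetaTerm_succ, sum_sub_distrib, ← mul_sum,
      sum_add_distrib]
    rw [shift 1 (by norm_num) le_rfl, shift (-1) le_rfl (by norm_num), widen, oddProd_succ]
    ring

theorem qPochhammer_two_mul (N : ℕ) :
    qPochhammer q (2 * N) = oddProd q N * qPochhammer (q ^ 2) N := by
  induction N with
  | zero => simp [qPochhammer_zero, oddProd]
  | succ N ih =>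
    rw [show 2 * (N + 1) = 2 * N + 1 + 1 by ring, qPochhammer_succ, qPochhammer_succ, ih,
      qPochhammer_succ, oddProd_succ, ← pow_mul]
    ring

theorem pow_succ_dvd_qPochhammer_sub {a b : ℕ} (h : b ≤ a) :
    q ^ (b + 1) ∣ qPochhammer q a - qPochhammer q b := by
  induction a, h using Nat.le_induction with
  | base => simp
  | succ a hba ih =>
    rw [qPochhammer_succ, show qPochhammer q a * (1 - q ^ (a + 1)) - qPochhammer q b
      = (qPochhammer q a - qPochhammer q b) - qPochhammer q a * q ^ (a + 1) by ring]
    exact ih.sub ((pow_dvd_pow q (by omega)).mul_left _)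

end Theta

section PowerSeries

variable {R : Type*} [CommRing R] {p q : R⟦X⟧}

theorem isUnit_qPochhammer (hp : constantCoeff p = 0) (m : ℕ) : IsUnit (qPochhammer p m) := by
  rw [isUnit_iff_constantCoeff, qPochhammer, map_prod, prod_eq_one fun i hi => ?_]
  · exact isUnit_one
  · rw [map_sub, map_one, map_pow, hp, zero_pow (by simp at hi; omega), sub_zero]

theorem pow_succ_dvd_gaussBinom_mul_qPochhammer_sub_one (hp : constantCoeff p = 0)
    {a b m r : ℕ} (ha : r ≤ a) (hb : r ≤ b) (hm : r ≤ m) :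
    p ^ (r + 1) ∣ gaussBinom p (a + b) a * qPochhammer p m - 1 := by
  have hF {s : ℕ} (hs : r ≤ s) : Ideal.Quotient.mk (Ideal.span {p ^ (r + 1)}) (qPochhammer p s)
      = Ideal.Quotient.mk _ (qPochhammer p r) :=
    (Ideal.Quotient.mk_eq_mk_iff_sub_mem _ _).2
      (Ideal.mem_span_singleton.2 (pow_succ_dvd_qPochhammer_sub p hs))
  have hu := (isUnit_qPochhammer hp a).mul (isUnit_qPochhammer hp b)
  rw [← hu.dvd_mul_right, ← Ideal.mem_span_singleton, ← Ideal.Quotient.eq_zero_iff_mem,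
    show (gaussBinom p (a + b) a * qPochhammer p m - 1) * (qPochhammer p a * qPochhammer p b)
      = qPochhammer p (a + b) * qPochhammer p m - qPochhammer p a * qPochhammer p b by
      linear_combination qPochhammer p m * gaussBinom_mul_qPochhammer p (a + b) a b rfl]
  rw [map_sub, map_mul, map_mul, hF (by omega), hF hm, hF ha, hF hb, sub_self]

theorem pow_succ_dvd_oddProd_sq_mul_sub_theta (hq : constantCoeff q = 0) (N : ℕ) :
    q ^ (N + 1) ∣ oddProd q N ^ 2 * qPochhammer (q ^ 2) N - theta q N := by
  rw [oddProd_sq, sum_mul, theta, ← sum_sub_distrib]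
  refine dvd_sum fun j hj => ?_
  rw [mem_Icc] at hj
  have hd := pow_succ_dvd_gaussBinom_mul_qPochhammer_sub_one (p := q ^ 2) (by simp [hq])
    (a := (N + j).toNat) (b := (N - j).toNat) (m := N) (r := N - j.natAbs) (by omega) (by omega)
    (by omega)
  rw [show (N + j).toNat + (N - j).toNat = 2 * N by omega, Int.toNat_of_nonneg (by omega),
    ← pow_mul] at hd
  have hexp : N + 1 ≤ j.natAbs ^ 2 + 2 * (N - j.natAbs + 1) := by
    have := two_mul_le_add_sq j.natAbs 1
    omega
  have hterm : thetaTerm q N j * qPochhammer (q ^ 2) N - (j.negOnePow : R⟦X⟧) * q ^ j.natAbs ^ 2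
      = (j.negOnePow : R⟦X⟧) * (q ^ j.natAbs ^ 2
        * (gaussBinom (q ^ 2) (2 * N) (N + j) * qPochhammer (q ^ 2) N - 1)) := by
    rw [thetaTerm]
    ring
  rw [hterm]
  refine Dvd.dvd.mul_left ?_ _
  calc q ^ (N + 1) ∣ q ^ (j.natAbs ^ 2 + 2 * (N - j.natAbs + 1)) := pow_dvd_pow q hexp
    _ = q ^ j.natAbs ^ 2 * q ^ (2 * (N - j.natAbs + 1)) := pow_add ..
    _ ∣ _ := mul_dvd_mul_left _ hd

theorem X_pow_dvd_sub_theta_sq_mul_theta_sq {F : R⟦X⟧} (N : ℕ)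
    (hF : F * qPochhammer (X ^ 4) N ^ 2 = qPochhammer X N ^ 4 * qPochhammer (X ^ 2) N ^ 2) :
    (X : R⟦X⟧) ^ (N + 1) ∣ F - theta X N ^ 2 * theta (X ^ 2) N ^ 2 := by
  set π := Ideal.Quotient.mk (Ideal.span {(X : R⟦X⟧) ^ (N + 1)})
  have hπ {f g : R⟦X⟧} (h : X ^ (N + 1) ∣ f - g) : π f = π g :=
    (Ideal.Quotient.mk_eq_mk_iff_sub_mem _ _).2 (Ideal.mem_span_singleton.2 h)
  have hX2 : (X : R⟦X⟧) ^ (N + 1) ∣ (X ^ 2) ^ (N + 1) := by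
    rw [← pow_mul]
    exact pow_dvd_pow _ (by omega)
  have hX4 : (X : R⟦X⟧) ^ 4 = (X ^ 2) ^ 2 := by ring
  have hX2₀ : constantCoeff (X ^ 2 : R⟦X⟧) = 0 := by simp
  have h1 : π (qPochhammer X N) = π (oddProd X N) * π (qPochhammer (X ^ 2) N) := by
    rw [← map_mul, ← qPochhammer_two_mul]
    exact (hπ (pow_succ_dvd_qPochhammer_sub X (by omega))).symm
  have h2 : π (qPochhammer (X ^ 2) N) = π (oddProd (X ^ 2) N) * π (qPochhammer (X ^ 4) N) := by
    rw [← map_mul, hX4, ← qPochhammer_two_mul]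
    exact (hπ (hX2.trans (pow_succ_dvd_qPochhammer_sub _ (by omega)))).symm
  have h3 : π (oddProd X N) ^ 2 * π (qPochhammer (X ^ 2) N) = π (theta X N) := by
    rw [← map_pow, ← map_mul]
    exact hπ (pow_succ_dvd_oddProd_sq_mul_sub_theta constantCoeff_X N)
  have h4 : π (oddProd (X ^ 2) N) ^ 2 * π (qPochhammer (X ^ 4) N) = π (theta (X ^ 2) N) := by
    rw [← map_pow, ← map_mul, hX4]
    exact hπ (hX2.trans (pow_succ_dvd_oddProd_sq_mul_sub_theta hX2₀ N))
  have hu : IsUnit (π (qPochhammer (X ^ 4) N) ^ 2) :=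
    ((isUnit_qPochhammer (by simp) N).map π).pow 2
  rw [← Ideal.mem_span_singleton, ← Ideal.Quotient.mk_eq_mk_iff_sub_mem]
  refine hu.mul_left_injective ?_
  have hF' := congrArg π hF
  simp only [map_mul, map_pow] at hF' ⊢
  calc π F * π (qPochhammer (X ^ 4) N) ^ 2
      = (π (oddProd X N) ^ 2 * π (qPochhammer (X ^ 2) N)) ^ 2
          * π (qPochhammer (X ^ 2) N) ^ 4 := by
        rw [hF', h1]; ring
    _ = π (theta X N) ^ 2 * (π (oddProd (X ^ 2) N) ^ 2 * π (qPochhammer (X ^ 4) N)) ^ 2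
          * π (qPochhammer (X ^ 4) N) ^ 2 := by
        rw [h3, h2]; ring
    _ = _ := by rw [h4]

end PowerSeries

section Coefficient

noncomputable def box (N : ℕ) : Finset (ℤ × ℤ × ℤ × ℤ) :=
  Icc (-N : ℤ) N ×ˢ Icc (-N : ℤ) N ×ˢ Icc (-N : ℤ) N ×ˢ Icc (-N : ℤ) N

def quadForm (v : ℤ × ℤ × ℤ × ℤ) : ℕ :=
  v.1.natAbs ^ 2 + v.2.1.natAbs ^ 2 + 2 * v.2.2.1.natAbs ^ 2 + 2 * v.2.2.2.natAbs ^ 2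

theorem theta_sq_mul_theta_sq {R : Type*} [CommRing R] (q : R) (N : ℕ) :
    theta q N ^ 2 * theta (q ^ 2) N ^ 2
      = ∑ v ∈ box N, ((v.1 + v.2.1 + v.2.2.1 + v.2.2.2).negOnePow : R) * q ^ quadForm v := by
  rw [sq, sq, theta, theta, sum_mul_sum, sum_mul_sum, sum_mul_sum]
  simp_rw [sum_mul_sum]
  simp only [box, sum_product]
  refine sum_congr rfl fun x _ => ?_
  conv_lhs => rw [sum_comm]
  refine sum_congr rfl fun y _ => sum_congr rfl fun z _ => sum_congr rfl fun w _ => ?_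
  simp only [quadForm, Int.negOnePow_add, Units.val_mul, Int.cast_mul, pow_add, pow_mul]
  ring

theorem mem_filter_quadForm {N n : ℕ} (hnN : n < N) {x y z w : ℤ} :
    (x, y, z, w) ∈ {v ∈ box N | quadForm v = n}
      ↔ x ^ 2 + y ^ 2 + 2 * z ^ 2 + 2 * w ^ 2 = n := by
  have hQ : (quadForm (x, y, z, w) : ℤ) = x ^ 2 + y ^ 2 + 2 * z ^ 2 + 2 * w ^ 2 := by
    simp [quadForm, sq_abs]
  have hbound {c : ℤ} (hc : c ^ 2 < N) : c ∈ Icc (-N : ℤ) N := by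
    rw [mem_Icc]
    constructor <;> nlinarith
  simp only [mem_filter, box, mem_product, ← hQ, Nat.cast_inj]
  refine ⟨And.right, fun h => ⟨⟨hbound ?_, hbound ?_, hbound ?_, hbound ?_⟩, h⟩⟩ <;>
    nlinarith [sq_nonneg x, sq_nonneg y, sq_nonneg z, sq_nonneg w]

theorem coeff_theta_sq_mul_theta_sq (N n : ℕ) :
    coeff n (theta (X : ℤ⟦X⟧) N ^ 2 * theta (X ^ 2) N ^ 2)
      = ∑ v ∈ box N with quadForm v = n,
          ((v.1 + v.2.1 + v.2.2.1 + v.2.2.2).negOnePow : ℤ) := by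
  rw [theta_sq_mul_theta_sq, map_sum, sum_filter]
  refine sum_congr rfl fun v _ => ?_
  rw [← map_intCast (C (R := ℤ)), coeff_C_mul, coeff_X_pow, mul_ite, mul_one, mul_zero,
    Int.cast_id]
  exact if_congr eq_comm rfl rfl

theorem even_add_and_odd_add_of_emod_four {x y z w : ℤ}
    (h : (x ^ 2 + y ^ 2 + 2 * z ^ 2 + 2 * w ^ 2) % 4 = 2) : Even (x + y) ∧ Odd (y + z + w) := by
  have hmod (t k : ℤ) : (t : ZMod 4) = k ↔ t % 4 = k % 4 := ZMod.intCast_eq_intCast_iff' t k 4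
  have key : ∀ a b c d : ZMod 4, a ^ 2 + b ^ 2 + 2 * c ^ 2 + 2 * d ^ 2 = 2 →
      2 * (a + b) = 0 ∧ 2 * (b + c + d) = 2 := by decide
  obtain ⟨h₁, h₂⟩ := key x y z w (by exact_mod_cast (hmod _ 2).2 h)
  replace h₁ := (hmod (2 * (x + y)) 0).1 (by push_cast; exact h₁)
  replace h₂ := (hmod (2 * (y + z + w)) 2).1 (by push_cast; exact h₂)
  rw [Int.even_iff, Int.odd_iff]
  omega

theorem sum_negOnePow_filter_quadForm_eq_zero {N n : ℕ} (hn : n % 4 = 2) (hnN : n < N) :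
    ∑ v ∈ box N with quadForm v = n,
      ((v.1 + v.2.1 + v.2.2.1 + v.2.2.2).negOnePow : ℤ) = 0 := by
  set f : ℤ × ℤ × ℤ × ℤ → ℤ := fun v => (v.1 + v.2.1 + v.2.2.1 + v.2.2.2).negOnePow
  set σ : ℤ × ℤ × ℤ × ℤ → ℤ × ℤ × ℤ × ℤ := fun v =>
    (v.2.2.1 + v.2.2.2, v.2.2.1 - v.2.2.2, (v.1 + v.2.1) / 2, (v.1 - v.2.1) / 2)
  have key : ∀ v ∈ {v ∈ box N | quadForm v = n},
      σ v ∈ {v ∈ box N | quadForm v = n} ∧ σ (σ v) = v ∧ f (σ v) = -f v := by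
    rintro ⟨x, y, z, w⟩ hv
    rw [mem_filter_quadForm hnN] at hv
    obtain ⟨⟨u, hu⟩, hodd⟩ := even_add_and_odd_add_of_emod_four (by rw [hv]; omega)
    have h₁ : (x + y) / 2 = u := by omega
    have h₂ : (x - y) / 2 = x - u := by omega
    simp only [σ, f, h₁, h₂, mem_filter_quadForm hnN]
    refine ⟨by linear_combination hv + (x - y - 2 * u) * hu, by
      simp only [Prod.mk.injEq]; omega, ?_⟩
    have hsign : (x + y + z + w).negOnePow = (x + 2 * z + 1).negOnePow := by
      obtain ⟨k, hk⟩ := hodd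
      exact (Int.negOnePow_eq_iff _ _).2 ⟨k - z, by omega⟩
    rw [show z + w + (z - w) + u + (x - u) = x + 2 * z by ring, hsign, Int.negOnePow_succ,
      Units.val_neg, neg_neg]
  refine sum_involution (fun v _ => σ v) (fun v hv => ?_) (fun v hv hfv hσ => hfv ?_)
    (fun v hv => (key v hv).1) (fun v hv => (key v hv).2.1)
  · change f v + f (σ v) = 0
    rw [(key v hv).2.2, add_neg_cancel]
  · have := (key v hv).2.2
    rw [hσ] at this
    change f v = 0
    linarith

end Coefficient

end ThetaProduct

/-- For `n ≡ 2 (mod 4)`, the `n`-th coefficient of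
`∏_{j≥1} (1-q^j)^4 (1-q^{2j})^2 / (1-q^{4j})^2` vanishes. -/
theorem stmt8 (n : ℕ) (hn : n % 4 = 2) (F : PowerSeries ℤ)
    (hF : F * ∏ j ∈ Finset.Icc 1 (n + 1), (1 - PowerSeries.X ^ (4 * j)) ^ 2
        = ∏ j ∈ Finset.Icc 1 (n + 1),
            (1 - PowerSeries.X ^ j) ^ 4 * (1 - PowerSeries.X ^ (2 * j)) ^ 2) :
    PowerSeries.coeff (R := ℤ) n F = 0 := by
  have hF' : F * ThetaProduct.qPochhammer (X ^ 4) (n + 1) ^ 2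
      = ThetaProduct.qPochhammer X (n + 1) ^ 4 * ThetaProduct.qPochhammer (X ^ 2) (n + 1) ^ 2 := by
    simpa only [ThetaProduct.qPochhammer, prod_mul_distrib, prod_pow, pow_mul] using hF
  have hcoeff := X_pow_dvd_iff.mp (ThetaProduct.X_pow_dvd_sub_theta_sq_mul_theta_sq (n + 1) hF') n
    (by omega)
  rw [map_sub, sub_eq_zero] at hcoeff
  rw [hcoeff, ThetaProduct.coeff_theta_sq_mul_theta_sq,
    ThetaProduct.sum_negOnePow_filter_quadForm_eq_zero hn (by omega)]
end

section
/- The sequence of signs of the coefficients C(n) of ∏_{j≥1}(1-q^j)^4 (1-q^{2j})^2 / (1-q^{4j})^2 satisfies: sgn C(n) = 1 if n ≡ 0, 3, 7 (mod 8); sgn C(n) = -1 if n ≡ 1, 4, 5 (mod 8); and C(n) = 0 if n ≡ 2 (mod 4). Moreover, C(n) = -4(-4/n)σ(n) for odd n, where (-4/n) is the Kronecker symbol. -/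
/-! Substituting the expansion, every case is immediate from the values of `(-4/n)` and the
positivity of `σ`, except `16 ∣ n`, where `C(n) = 8σ(4m) - 32σ(m)` with `m = n/16`: this is
positive because `4σ(m) < σ(4m)`, the divisors of `4m` containing `4d` for `d ∣ m` and also `1`. -/

open ArithmeticFunction ZMod

theorem jacobiSym_neg_four_of_odd {n : ℕ} (hn : Odd n) : jacobiSym (-4) n = χ₄ n := by
  have hcop : Int.gcd 2 n = 1 := Nat.coprime_two_left.2 hn
  rw [show (-4 : ℤ) = -(2 ^ 2) by norm_num, jacobiSym.neg _ hn, jacobiSym.sq_one' hcop, mul_one]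

theorem jacobiSym_neg_four_of_even {n : ℕ} (hn : n ≠ 0) (heven : Even n) :
    jacobiSym (-4) n = 0 := by
  refine jacobiSym.eq_zero_iff.2 ⟨hn, fun hcop => ?_⟩
  have : 2 ∣ Nat.gcd 4 n := Nat.dvd_gcd (by norm_num) heven.two_dvd
  change Nat.gcd 4 n = 1 at hcop
  omega

theorem mul_sigma_one_lt_sigma_one_mul {a k : ℕ} (ha : 1 < a) (hk : k ≠ 0) :
    a * sigma 1 k < sigma 1 (a * k) := by
  set M := k.divisors.image (a * ·)
  have hsub : insert 1 M ⊆ (a * k).divisors := by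
    intro d hd
    rcases Finset.mem_insert.1 hd with rfl | hd
    · exact Nat.one_mem_divisors.2 (by positivity)
    · obtain ⟨e, he, rfl⟩ := Finset.mem_image.1 hd
      exact Nat.mem_divisors.2 ⟨mul_dvd_mul_left a (Nat.dvd_of_mem_divisors he), by positivity⟩
  have hone : 1 ∉ M := fun h1 => by
    obtain ⟨e, -, hae⟩ := Finset.mem_image.1 h1
    exact ha.ne' (Nat.eq_one_of_mul_eq_one_right hae)
  calc a * sigma 1 k < 1 + ∑ d ∈ M, d := by
        rw [sigma_one_apply, Finset.sum_image fun _ _ _ _ h => Nat.eq_of_mul_eq_mul_left (by omega) h,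
          Finset.mul_sum]
        omega
    _ = ∑ d ∈ insert 1 M, d := (Finset.sum_insert (f := id) hone).symm
    _ ≤ sigma 1 (a * k) := by rw [sigma_one_apply]; exact Finset.sum_le_sum_of_subset hsub

/-- The coefficient of `q ^ n` in
`1 - 4 ∑ (-4/n) σ(n) qⁿ + 8 ∑ (-1)ⁿ σ(n) q⁴ⁿ - 32 ∑ σ(n) q¹⁶ⁿ`. -/
def eisensteinCoeff (σ : ℕ → ℤ) (n : ℕ) : ℤ :=
  (if n = 0 then 1 else 0)
    - 4 * jacobiSym (-4) n * σ n
    + 8 * (if 4 ∣ n then (-1) ^ (n / 4) * σ (n / 4) else 0)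
    - 32 * (if 16 ∣ n then σ (n / 16) else 0)

namespace eisensteinCoeff

variable {σ : ℕ → ℤ} {n : ℕ}

theorem of_odd (hn : Odd n) : eisensteinCoeff σ n = -4 * jacobiSym (-4) n * σ n := by
  have := Nat.odd_iff.1 hn
  rw [eisensteinCoeff, if_neg (by omega), if_neg (by omega), if_neg (by omega)]
  ring

theorem of_mod_four_eq_two (hn : n % 4 = 2) : eisensteinCoeff σ n = 0 := by
  rw [eisensteinCoeff, if_neg (by omega), if_neg (by omega), if_neg (by omega),
    jacobiSym_neg_four_of_even (by omega) (Nat.even_iff.2 (by omega))]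
  ring

theorem neg_of_mod_four_eq_one (hpos : ∀ k, 0 < k → 0 < σ k) (hn : n % 4 = 1) :
    eisensteinCoeff σ n < 0 := by
  rw [of_odd (Nat.odd_iff.2 (by omega)), jacobiSym_neg_four_of_odd (Nat.odd_iff.2 (by omega)),
    χ₄_nat_one_mod_four hn]
  linarith [hpos n (by omega)]

theorem pos_of_mod_four_eq_three (hpos : ∀ k, 0 < k → 0 < σ k) (hn : n % 4 = 3) :
    0 < eisensteinCoeff σ n := by
  rw [of_odd (Nat.odd_iff.2 (by omega)), jacobiSym_neg_four_of_odd (Nat.odd_iff.2 (by omega)),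
    χ₄_nat_three_mod_four hn]
  linarith [hpos n (by omega)]

theorem neg_of_mod_eight_eq_four (hpos : ∀ k, 0 < k → 0 < σ k) (hn : n % 8 = 4) :
    eisensteinCoeff σ n < 0 := by
  have hodd : Odd (n / 4) := Nat.odd_iff.2 (by omega)
  rw [eisensteinCoeff, if_neg (by omega), if_pos (by omega), if_neg (by omega), hodd.neg_one_pow,
    jacobiSym_neg_four_of_even (by omega) (Nat.even_iff.2 (by omega))]
  linarith [hpos (n / 4) (by omega)]

theorem pos_of_eight_dvd (hpos : ∀ k, 0 < k → 0 < σ k)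
    (hfour : ∀ k, 0 < k → 4 * σ k < σ (4 * k)) (hn : n ≠ 0) (h8 : 8 ∣ n) :
    0 < eisensteinCoeff σ n := by
  have heven : Even (n / 4) := Nat.even_iff.2 (by omega)
  rw [eisensteinCoeff, if_neg hn, if_pos (by omega), heven.neg_one_pow,
    jacobiSym_neg_four_of_even hn (Nat.even_iff.2 (by omega))]
  split_ifs with h16
  · have hquarter : n / 4 = 4 * (n / 16) := by omega
    rw [hquarter]
    linarith [hfour (n / 16) (by omega)]
  · linarith [hpos (n / 4) (by omega)]

end eisensteinCoeff

/-- Assuming the Fourier expansion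
`∏(1-q^j)^4(1-q^{2j})^2(1-q^{4j})^{-2} = 1 - 4∑(-4/n)σ(n)q^n + 8∑(-1)^n σ(n)q^{4n}
 - 32∑σ(n)q^{16n}`, the coefficients `C(n)` satisfy: `sgn C(n) = 1` for
`n ≡ 0,3,7 (mod 8)`, `sgn C(n) = -1` for `n ≡ 1,4,5 (mod 8)`, `C(n) = 0` for
`n ≡ 2 (mod 4)`, and `C(n) = -4(-4/n)σ(n)` for odd `n`. -/
theorem stmt10 (C : ℕ → ℤ) (σ : ℕ → ℤ)
    (hσ : ∀ k, σ k = ∑ d ∈ k.divisors, (d : ℤ))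
    (hC : ∀ n, C n = (if n = 0 then 1 else 0)
        - 4 * jacobiSym (-4) n * σ n
        + 8 * (if 4 ∣ n then (-1) ^ (n / 4) * σ (n / 4) else 0)
        - 32 * (if 16 ∣ n then σ (n / 16) else 0)) :
    ∀ n, 1 ≤ n →
      ((n % 8 = 0 ∨ n % 8 = 3 ∨ n % 8 = 7) → Int.sign (C n) = 1) ∧
      ((n % 8 = 1 ∨ n % 8 = 4 ∨ n % 8 = 5) → Int.sign (C n) = -1) ∧
      (n % 4 = 2 → C n = 0) ∧
      (Odd n → C n = -4 * jacobiSym (-4) n * σ n) := by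
  have hσ_sigma : ∀ k, σ k = sigma 1 k := fun k => by rw [hσ, sigma_one_apply]; push_cast; rfl
  have hpos : ∀ k, 0 < k → 0 < σ k := fun k hk => by
    rw [hσ_sigma]; exact_mod_cast sigma_pos 1 k hk.ne'
  have hfour : ∀ k, 0 < k → 4 * σ k < σ (4 * k) := fun k hk => by
    rw [hσ_sigma, hσ_sigma]; exact_mod_cast mul_sigma_one_lt_sigma_one_mul (by norm_num) hk.ne'
  obtain rfl : C = eisensteinCoeff σ := funext hC
  intro n hn
  refine ⟨?_, ?_, eisensteinCoeff.of_mod_four_eq_two, eisensteinCoeff.of_odd⟩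
  · rintro (h | h | h)
    · exact Int.sign_eq_one_of_pos (eisensteinCoeff.pos_of_eight_dvd hpos hfour (by omega) (by omega))
    all_goals exact Int.sign_eq_one_of_pos (eisensteinCoeff.pos_of_mod_four_eq_three hpos (by omega))
  · rintro (h | h | h)
    · exact Int.sign_eq_neg_one_of_neg (eisensteinCoeff.neg_of_mod_four_eq_one hpos (by omega))
    · exact Int.sign_eq_neg_one_of_neg (eisensteinCoeff.neg_of_mod_eight_eq_four hpos h)
    · exact Int.sign_eq_neg_one_of_neg (eisensteinCoeff.neg_of_mod_four_eq_one hpos (by omega))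
end

section
/- For every positive integer n, the number of integer quadruples (a,b,c,d) with a^2 + b^2 + 2c^2 + 2d^2 = n is strictly positive; consequently the number of integer 5-tuples (a,b,c,d,e) with a^2 + b^2 + 2c^2 + 2d^2 + 2e^2 = n is strictly positive. -/
/-!
By Lagrange, `n = a² + b² + c² + d²`. Two of `a, b, c` have the same parity, say `x` and `y`,
and then `x² + y² = 2((x + y)/2)² + 2((x - y)/2)²`. Setting the fifth variable to `0` handles
the second form. Both solution sets are finite since every coordinate satisfies `|t| ≤ t² ≤ n`.
-/

lemma Int.exists_two_mul_sq_add_two_mul_sq_eq {x y : ℤ} (h : Even (x + y)) :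
    ∃ u v : ℤ, 2 * u ^ 2 + 2 * v ^ 2 = x ^ 2 + y ^ 2 := by
  obtain ⟨u, hu⟩ := h
  obtain rfl : x = 2 * u - y := by linarith
  exact ⟨u, u - y, by ring⟩

lemma Int.even_add_of_three (a b c : ℤ) : Even (a + b) ∨ Even (a + c) ∨ Even (b + c) := by
  simp only [Int.even_add]
  tauto

theorem Int.exists_sq_add_sq_add_two_mul_sq_add_two_mul_sq_eq (n : ℕ) :
    ∃ a b c d : ℤ, a ^ 2 + b ^ 2 + 2 * c ^ 2 + 2 * d ^ 2 = n := by
  obtain ⟨a, b, c, d, h⟩ := Nat.sum_four_squares n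
  have hsum : (a : ℤ) ^ 2 + (b : ℤ) ^ 2 + (c : ℤ) ^ 2 + (d : ℤ) ^ 2 = n := by exact_mod_cast h
  rcases Int.even_add_of_three a b c with hab | hac | hbc
  · obtain ⟨u, v, huv⟩ := Int.exists_two_mul_sq_add_two_mul_sq_eq hab
    exact ⟨c, d, u, v, by linarith⟩
  · obtain ⟨u, v, huv⟩ := Int.exists_two_mul_sq_add_two_mul_sq_eq hac
    exact ⟨b, d, u, v, by linarith⟩
  · obtain ⟨u, v, huv⟩ := Int.exists_two_mul_sq_add_two_mul_sq_eq hbc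
    exact ⟨a, d, u, v, by linarith⟩

lemma Int.finite_setOf_sq_le (n : ℤ) : {t : ℤ | t ^ 2 ≤ n}.Finite := by
  refine (Set.finite_Icc (-n) n).subset fun t (ht : t ^ 2 ≤ n) => ?_
  have := Int.le_self_sq t
  have := Int.le_self_sq (-t)
  constructor <;> nlinarith

lemma finite_setOf_sq_add_sq_add_two_mul_sq_add_two_mul_sq_add_two_mul_sq_eq (n : ℤ) :
    {x : ℤ × ℤ × ℤ × ℤ × ℤ |
      x.1 ^ 2 + x.2.1 ^ 2 + 2 * x.2.2.1 ^ 2 + 2 * x.2.2.2.1 ^ 2 + 2 * x.2.2.2.2 ^ 2 = n}.Finite := by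
  have hS := Int.finite_setOf_sq_le n
  refine (hS.prod (hS.prod (hS.prod (hS.prod hS)))).subset ?_
  rintro ⟨p, q, r, s, t⟩ (hx : p ^ 2 + q ^ 2 + 2 * r ^ 2 + 2 * s ^ 2 + 2 * t ^ 2 = n)
  refine ⟨?_, ?_, ?_, ?_, ?_⟩ <;>
    simp only [Set.mem_ofPred_eq] <;>
    nlinarith [sq_nonneg p, sq_nonneg q, sq_nonneg r, sq_nonneg s, sq_nonneg t]

theorem stmt11_general (n : ℕ) :
    0 < Set.ncard {x : ℤ × ℤ × ℤ × ℤ |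
        x.1 ^ 2 + x.2.1 ^ 2 + 2 * x.2.2.1 ^ 2 + 2 * x.2.2.2 ^ 2 = n} ∧
      0 < Set.ncard {x : ℤ × ℤ × ℤ × ℤ × ℤ |
        x.1 ^ 2 + x.2.1 ^ 2 + 2 * x.2.2.1 ^ 2 + 2 * x.2.2.2.1 ^ 2
          + 2 * x.2.2.2.2 ^ 2 = n} := by
  have hfin5 := finite_setOf_sq_add_sq_add_two_mul_sq_add_two_mul_sq_add_two_mul_sq_eq n
  have hfin4 : {x : ℤ × ℤ × ℤ × ℤ |
      x.1 ^ 2 + x.2.1 ^ 2 + 2 * x.2.2.1 ^ 2 + 2 * x.2.2.2 ^ 2 = n}.Finite := by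
    refine (hfin5.preimage (f := fun x => (x.1, x.2.1, x.2.2.1, x.2.2.2, 0)) ?_).subset ?_
    · rintro ⟨a, b, c, d⟩ - ⟨a', b', c', d'⟩ - h
      simpa using h
    · intro x hx
      simpa using hx
  obtain ⟨a, b, c, d, h⟩ := Int.exists_sq_add_sq_add_two_mul_sq_add_two_mul_sq_eq n
  exact ⟨(Set.ncard_pos hfin4).2 ⟨(a, b, c, d), h⟩,
    (Set.ncard_pos hfin5).2 ⟨(a, b, c, d, 0), by simpa using h⟩⟩

/-- Every positive integer is represented by `a² + b² + 2c² + 2d²` (Liouville), and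
consequently by `a² + b² + 2c² + 2d² + 2e²`. -/
theorem stmt11 (n : ℕ) (hn : 0 < n) :
    0 < Set.ncard {x : ℤ × ℤ × ℤ × ℤ |
        x.1 ^ 2 + x.2.1 ^ 2 + 2 * x.2.2.1 ^ 2 + 2 * x.2.2.2 ^ 2 = n} ∧
      0 < Set.ncard {x : ℤ × ℤ × ℤ × ℤ × ℤ |
        x.1 ^ 2 + x.2.1 ^ 2 + 2 * x.2.2.1 ^ 2 + 2 * x.2.2.2.1 ^ 2
          + 2 * x.2.2.2.2 ^ 2 = n} :=
  stmt11_general n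
end

section
/- Let p be an odd prime, k a positive integer, and n = p^a · m with a ≥ 0 and p ∤ m. Then the sign of ∑_{d | n} (d/p) · d^k equals the Legendre symbol (m/p), where (d/p) is the Legendre symbol. -/
/-!
Writing `n = p^a m`, the divisor sum `∑_{d ∣ n} (d/p) d^k` is multiplicative in `n`; its factor
at `p^a` is `1`, since every divisor but `1` is divisible by `p`. At a prime power `q^b` with
`q ≠ p` it is the geometric sum `1 + r + ⋯ + r^b` with ratio `r = (q/p) q^k`, and because
`|r| ≥ 2` its last term dominates, so its sign is `(q/p)^b = (q^b/p)`. Both sides of the claim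
being multiplicative in `m`, they agree.
-/

open Finset ArithmeticFunction
open scoped ArithmeticFunction.zeta NumberTheorySymbols

theorem Int.sign_geom_sum_s12 {r : ℤ} (hr₀ : r ≠ 0) (hr₁ : r ≠ -1) (n : ℕ) :
    (∑ i ∈ Finset.range (n + 1), r ^ i).sign = r.sign ^ n := by
  rcases hr₀.lt_or_gt with hneg | hpos
  · have hr : r + 1 < 0 := by omega
    rw [Int.sign_eq_neg_one_of_neg hneg]
    rcases n.even_or_odd with hn | hn
    · rw [hn.neg_one_pow]
      exact Int.sign_eq_one_of_pos (hn.add_one.geom_sum_pos)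
    · rw [hn.neg_one_pow]
      exact Int.sign_eq_neg_one_of_neg ((geom_sum_neg_iff n.succ_ne_zero).2 ⟨hn.add_one, hr⟩)
  · rw [Int.sign_eq_one_of_pos hpos, one_pow]
    exact Int.sign_eq_one_of_pos (geom_sum_pos hpos.le n.succ_ne_zero)

section JacobiSigma

variable (p : ℕ) {k : ℕ} (hk : k ≠ 0)

def jacobiTwistedPow : ArithmeticFunction ℤ :=
  ⟨fun d => J(d | p) * (d : ℤ) ^ k, by simp [hk]⟩

theorem jacobiTwistedPow_apply (d : ℕ) : jacobiTwistedPow p hk d = J(d | p) * (d : ℤ) ^ k :=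
  rfl

theorem isMultiplicative_jacobiTwistedPow : (jacobiTwistedPow p hk).IsMultiplicative := by
  refine ⟨by simp [jacobiTwistedPow_apply], fun {x y} _ => ?_⟩
  simp only [jacobiTwistedPow_apply, Nat.cast_mul, jacobiSym.mul_left, mul_pow]
  ring

def jacobiSigma : ArithmeticFunction ℤ :=
  ↑ζ * jacobiTwistedPow p hk

theorem jacobiSigma_apply (n : ℕ) :
    jacobiSigma p hk n = ∑ d ∈ n.divisors, J(d | p) * (d : ℤ) ^ k :=
  coe_zeta_mul_apply

theorem isMultiplicative_jacobiSigma : (jacobiSigma p hk).IsMultiplicative :=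
  isMultiplicative_zeta.natCast.mul (isMultiplicative_jacobiTwistedPow p hk)

theorem jacobiSigma_prime_pow {q : ℕ} (hq : q.Prime) (b : ℕ) :
    jacobiSigma p hk (q ^ b) = ∑ i ∈ range (b + 1), (J(q | p) * (q : ℤ) ^ k) ^ i := by
  rw [jacobiSigma_apply, Nat.sum_divisors_prime_pow hq]
  refine sum_congr rfl fun i _ => ?_
  rw [Nat.cast_pow, jacobiSym.pow_left, mul_pow, ← pow_mul, ← pow_mul, mul_comm i k]

theorem jacobiSigma_prime_pow_self (hp : p.Prime) (a : ℕ) : jacobiSigma p hk (p ^ a) = 1 := by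
  have hpp : J(p | p) = 0 := by
    have : NeZero p := ⟨hp.ne_zero⟩
    rw [jacobiSym.eq_zero_iff_not_coprime, Int.gcd_natCast_natCast, Nat.gcd_self]
    exact hp.ne_one
  rw [jacobiSigma_prime_pow p hk hp, sum_range_succ']
  simp [hpp]

theorem sign_jacobiSigma_prime_pow {q : ℕ} (hq : q.Prime) (hqp : q.Coprime p) (b : ℕ) :
    (jacobiSigma p hk (q ^ b)).sign = J((q ^ b : ℕ) | p) := by
  have hJ : J(q | p) = 1 ∨ J(q | p) = -1 :=
    jacobiSym.eq_one_or_neg_one (by rwa [Int.gcd_natCast_natCast])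
  have hqk : (2 : ℤ) ≤ (q : ℤ) ^ k :=
    le_self_pow₀ (by exact_mod_cast hq.one_lt.le) hk |>.trans' (by exact_mod_cast hq.two_le)
  have hsign : (J(q | p) * (q : ℤ) ^ k).sign = J(q | p) := by
    rw [Int.sign_mul, Int.sign_eq_one_of_pos (a := (q : ℤ) ^ k) (by omega), mul_one]
    rcases hJ with h | h <;> simp [h]
  have hr₀ : J(q | p) * (q : ℤ) ^ k ≠ 0 := by rcases hJ with h | h <;> rw [h] <;> omega
  have hr₁ : J(q | p) * (q : ℤ) ^ k ≠ -1 := by rcases hJ with h | h <;> rw [h] <;> omega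
  rw [jacobiSigma_prime_pow p hk hq, Int.sign_geom_sum_s12 hr₀ hr₁, hsign, Nat.cast_pow,
    jacobiSym.pow_left]

theorem sign_jacobiSigma_of_coprime {n : ℕ} (hn : n ≠ 0) (hnp : n.Coprime p) :
    (jacobiSigma p hk n).sign = J(n | p) := by
  induction n using Nat.recOnPosPrimePosCoprime with
  | zero => exact absurd rfl hn
  | one => simp [(isMultiplicative_jacobiSigma p hk).map_one]
  | prime_pow q b hq hb =>
    exact sign_jacobiSigma_prime_pow p hk hq
      (Nat.Coprime.coprime_dvd_left (dvd_pow_self q hb.ne') hnp) b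
  | coprime x y hx hy hxy ihx ihy =>
    rw [(isMultiplicative_jacobiSigma p hk).map_mul_of_coprime hxy, Int.sign_mul,
      ihx (by omega) (Nat.Coprime.coprime_mul_right hnp),
      ihy (by omega) (Nat.Coprime.coprime_mul_left hnp), Nat.cast_mul, jacobiSym.mul_left]

end JacobiSigma

theorem stmt12_general (p : ℕ) (hp : p.Prime) (k a m : ℕ) (hk : 1 ≤ k)
    (hpm : ¬ p ∣ m) :
    Int.sign (∑ d ∈ (p ^ a * m).divisors, jacobiSym d p * (d : ℤ) ^ k)
      = jacobiSym m p := by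
  have hk₀ : k ≠ 0 := by omega
  have hm : m ≠ 0 := by rintro rfl; exact hpm (dvd_zero p)
  have hmp : m.Coprime p := ((hp.coprime_iff_not_dvd).2 hpm).symm
  rw [← jacobiSigma_apply p hk₀,
    (isMultiplicative_jacobiSigma p hk₀).map_mul_of_coprime (hmp.symm.pow_left a),
    jacobiSigma_prime_pow_self p hk₀ hp, one_mul]
  exact sign_jacobiSigma_of_coprime p hk₀ hm hmp

/-- For an odd prime `p`, `k ≥ 1`, and `n = p^a m` with `p ∤ m`, the sign of
`∑_{d ∣ n} (d/p) d^k` equals the Legendre symbol `(m/p)`. -/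
theorem stmt12 (p : ℕ) (hp : p.Prime) (hpodd : Odd p) (k a m : ℕ) (hk : 1 ≤ k)
    (hm : 0 < m) (hpm : ¬ p ∣ m) :
    Int.sign (∑ d ∈ (p ^ a * m).divisors, jacobiSym d p * (d : ℤ) ^ k)
      = jacobiSym m p :=
  stmt12_general p hp k a m hk hpm
end

section
/- Let p be an odd prime, k ≥ 1 an integer, and let n = p^a m with p ∤ m. Then |∑_{d|n} (d/p) d^k| ≥ m^k · ∏_{ℓ | m, ℓ prime} (1 - ℓ^{-k}). -/
/-!
The map `d ↦ (d/p) d^k` is completely multiplicative and vanishes on multiples of `p`, so the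
divisor sum over `p^a m` equals the one over `m` and factors as `∏_ℓ ∑_{i ≤ e_ℓ} y_ℓ^i` with
`y_ℓ = ±ℓ^k`, where `m = ∏ ℓ^e_ℓ`. A geometric sum of length `e + 1` with real ratio `|y| ≥ 1`
has absolute value at least `|y|^e (1 - 1/|y|)`.
-/

open Finset ArithmeticFunction

theorem one_sub_inv_mul_pow_le_abs_geom_sum {y : ℝ} (hy : 1 ≤ |y|) (n : ℕ) :
    (1 - 1 / |y|) * |y| ^ n ≤ |∑ i ∈ range (n + 1), y ^ i| := by
  have hy₀ : 0 < |y| := by linarith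
  rcases n with _ | n
  · simp [inv_nonneg.mpr hy₀.le]
  have hlhs : (1 - 1 / |y|) * |y| ^ (n + 1) = |y| ^ (n + 1) - |y| ^ n := by
    field_simp
    ring
  rw [hlhs]
  have hyn : 1 ≤ |y| ^ n := one_le_pow₀ hy
  rcases le_abs'.mp hy with hneg | hpos
  · -- For `y ≤ -1`, multiply by `|y - 1| = |y| + 1` and compare with `|y ^ (n + 2) - 1|`.
    have hgeom : |∑ i ∈ range (n + 2), y ^ i| * (|y| + 1) = |y ^ (n + 2) - 1| := by
      rw [← geom_sum_mul, abs_mul, abs_of_neg (by linarith : y - 1 < 0),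
        abs_of_neg (by linarith : y < 0)]
      ring
    have hrev : |y| ^ (n + 2) - 1 ≤ |y ^ (n + 2) - 1| := by
      simpa [abs_pow] using abs_sub_abs_le_abs_sub (y ^ (n + 2)) 1
    refine le_of_mul_le_mul_right ?_ (by linarith : 0 < |y| + 1)
    have hexpand : (|y| ^ (n + 1) - |y| ^ n) * (|y| + 1) = |y| ^ (n + 2) - |y| ^ n := by ring
    rw [hgeom, hexpand]
    linarith
  · have hsum : y ^ (n + 1) ≤ ∑ i ∈ range (n + 2), y ^ i :=
      single_le_sum (fun i _ => pow_nonneg (by linarith) i) (self_mem_range_succ _)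
    rw [abs_of_pos (by linarith : 0 < y)]
    linarith [le_abs_self (∑ i ∈ range (n + 2), y ^ i), pow_nonneg (by linarith : 0 ≤ y) n]

theorem sum_divisors_eq_prod_sum_pow {R : Type*} [CommSemiring R] (f : ℕ →*₀ R) {n : ℕ}
    (hn : n ≠ 0) :
    ∑ d ∈ n.divisors, f d =
      ∏ ℓ ∈ n.primeFactors, ∑ i ∈ range (n.factorization ℓ + 1), f ℓ ^ i := by
  let g : ArithmeticFunction R := ⟨f, map_zero f⟩
  have hg : g.IsMultiplicative := ⟨map_one f, fun _ => map_mul f _ _⟩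
  have hgζ := hg.mul isMultiplicative_zeta.natCast
  change ∑ d ∈ n.divisors, g d = _
  rw [← coe_mul_zeta_apply, hgζ.multiplicative_factorization _ hn,
    Nat.prod_factorization_eq_prod_primeFactors]
  refine prod_congr rfl fun ℓ hℓ => ?_
  rw [coe_mul_zeta_apply, Nat.sum_divisors_prime_pow (Nat.prime_of_mem_primeFactors hℓ)]
  exact sum_congr rfl fun i _ => map_pow f ℓ i

theorem sum_divisors_prime_pow_mul_eq {M : Type*} [AddCommMonoid M] {f : ℕ → M} {p : ℕ}
    (hp : p.Prime) (hf : ∀ d, p ∣ d → f d = 0) (a : ℕ) {m : ℕ} (hm : m ≠ 0) :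
    ∑ d ∈ (p ^ a * m).divisors, f d = ∑ d ∈ m.divisors, f d := by
  refine (sum_subset (Nat.divisors_subset_of_dvd
    (mul_ne_zero (pow_ne_zero a hp.ne_zero) hm) (dvd_mul_left m _)) fun d hd hdm => ?_).symm
  refine hf d (by_contra fun hpd => hdm ?_)
  have hcop : d.Coprime (p ^ a) := ((hp.coprime_iff_not_dvd.mpr hpd).symm).pow_right a
  rw [Nat.mem_divisors] at hd ⊢
  exact ⟨hcop.dvd_of_dvd_mul_left hd.1, hm⟩

def jacobiSymMulPow {p : ℕ} (hp : p.Prime) (k : ℕ) : ℕ →*₀ ℝ where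
  toFun d := (jacobiSym d p : ℝ) * (d : ℝ) ^ k
  map_zero' := by simp [jacobiSym.zero_left hp.one_lt]
  map_one' := by simp
  map_mul' a b := by
    push_cast [jacobiSym.mul_left]
    ring

theorem jacobiSymMulPow_apply {p : ℕ} (hp : p.Prime) (k d : ℕ) :
    jacobiSymMulPow hp k d = (jacobiSym d p : ℝ) * (d : ℝ) ^ k := rfl

theorem jacobiSymMulPow_eq_zero {p : ℕ} (hp : p.Prime) (k : ℕ) {d : ℕ} (hd : p ∣ d) :
    jacobiSymMulPow hp k d = 0 := by
  have : NeZero p := ⟨hp.ne_zero⟩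
  have : jacobiSym d p = 0 := jacobiSym.eq_zero_iff_not_coprime.mpr <| by
    rw [Int.gcd_natCast_natCast]
    exact fun h => hp.one_lt.ne' (Nat.dvd_one.mp (h ▸ Nat.dvd_gcd hd dvd_rfl))
  simp [jacobiSymMulPow_apply, this]

theorem abs_jacobiSymMulPow {p : ℕ} (hp : p.Prime) (k : ℕ) {d : ℕ} (hd : d.Coprime p) :
    |jacobiSymMulPow hp k d| = (d : ℝ) ^ k := by
  rw [jacobiSymMulPow_apply, abs_mul, abs_pow, Nat.abs_cast]
  rcases jacobiSym.eq_one_or_neg_one (a := d) (b := p) (by rwa [Int.gcd_natCast_natCast])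
    with h | h <;> simp [h]

theorem stmt13_general (p : ℕ) (hp : p.Prime) (k a m : ℕ)
    (hm : 0 < m) (hpm : ¬ p ∣ m) :
    (m : ℝ) ^ k * ∏ ℓ ∈ m.primeFactors, (1 - 1 / (ℓ : ℝ) ^ k)
      ≤ |∑ d ∈ (p ^ a * m).divisors, (jacobiSym d p : ℝ) * (d : ℝ) ^ k| := by
  set f := jacobiSymMulPow hp k
  change _ ≤ |∑ d ∈ (p ^ a * m).divisors, f d|
  rw [sum_divisors_prime_pow_mul_eq hp (fun d => jacobiSymMulPow_eq_zero hp k) a hm.ne',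
    sum_divisors_eq_prod_sum_pow f hm.ne', abs_prod]
  have hmk : (m : ℝ) ^ k = ∏ ℓ ∈ m.primeFactors, ((ℓ : ℝ) ^ k) ^ m.factorization ℓ := by
    conv_lhs => rw [Nat.prod_primeFactors_pow_factorization hm.ne']
    push_cast
    rw [← prod_pow]
    exact prod_congr rfl fun ℓ _ => pow_right_comm _ _ _
  rw [hmk, ← prod_mul_distrib]
  have hℓk : ∀ ℓ ∈ m.primeFactors, (1 : ℝ) ≤ (ℓ : ℝ) ^ k := fun ℓ hℓ =>
    one_le_pow₀ (by exact_mod_cast (Nat.prime_of_mem_primeFactors hℓ).one_lt.le)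
  refine prod_le_prod (fun ℓ hℓ => ?_) fun ℓ hℓ => ?_
  · exact mul_nonneg (by positivity) (sub_nonneg.mpr (div_le_one_of_le₀ (hℓk ℓ hℓ) (by positivity)))
  · have hcop : ℓ.Coprime p := (Nat.coprime_primes (Nat.prime_of_mem_primeFactors hℓ) hp).mpr
      fun h => hpm (h ▸ Nat.dvd_of_mem_primeFactors hℓ)
    have habs := abs_jacobiSymMulPow hp k hcop
    rw [mul_comm, ← habs]
    exact one_sub_inv_mul_pow_le_abs_geom_sum (habs ▸ hℓk ℓ hℓ) _

/-- For an odd prime `p`, `k ≥ 1`, and `n = p^a m` with `p ∤ m`: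
`|∑_{d∣n} (d/p) d^k| ≥ m^k ∏_{ℓ ∣ m prime} (1 - ℓ^{-k})`. -/
theorem stmt13 (p : ℕ) (hp : p.Prime) (hpodd : Odd p) (k a m : ℕ) (hk : 1 ≤ k)
    (hm : 0 < m) (hpm : ¬ p ∣ m) :
    (m : ℝ) ^ k * ∏ ℓ ∈ m.primeFactors, (1 - 1 / (ℓ : ℝ) ^ k)
      ≤ |∑ d ∈ (p ^ a * m).divisors, (jacobiSym d p : ℝ) * (d : ℝ) ^ k| :=
  stmt13_general p hp k a m hm hpm
end
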